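/- arXiv:2605.07077 — 2 statements merged into one kernel-verified Lean document; each statement's English description precedes it below -/
import Mathlib

section
/- Let M be a loopless matroid on finite ground set E of rank r, and let F be a flat of M. Then the q-analogue [r − rk(F)]_q = 1 + q + ... + q^{r−rk(F)−1} equals Σ_{F ⊆ F' ⊊ E, F' flat} χ̄_{M/F'}(q), the sum of reduced characteristic polynomials over proper flats containing F. -/
open scoped Classical
open Polynomial

/-- The unsigned Stirling number of the first kind `c(n,k)`: the number of
permutations of an `n`-element set with exactly `k` disjoint cycles
(fixed points count as cycles). -/
noncomputable def stirlingFirst (n k : ℕ) : ℕ :=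
  (Finset.univ.filter fun σ : Equiv.Perm (Fin n) =>
    Multiset.card σ.cycleType + (n - σ.support.card) = k).card

/-- The Stirling number of the second kind `S(n,k)`: the number of partitions of an
`n`-element set into exactly `k` nonempty parts. -/
noncomputable def stirlingSecond (n k : ℕ) : ℕ :=
  (Finset.univ.filter fun P : Finset (Finset (Fin n)) =>
    P.card = k ∧ ∅ ∉ P ∧ (P : Set (Finset (Fin n))).PairwiseDisjoint id ∧
      P.sup id = Finset.univ).card

/-- A matroid on a finite ground set `E`, presented by its rank function. -/
structure FinMatroid (α : Type*) [DecidableEq α] where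
  E : Finset α
  rk : Finset α → ℕ
  rk_empty : rk ∅ = 0
  rk_le_card : ∀ S : Finset α, rk S ≤ S.card
  rk_mono : ∀ ⦃S T : Finset α⦄, S ⊆ T → rk S ≤ rk T
  rk_submod : ∀ S T : Finset α, rk (S ∪ T) + rk (S ∩ T) ≤ rk S + rk T

namespace FinMatroid

variable {α : Type*} [DecidableEq α]

/-- A flat of a matroid: a subset of the ground set such that adding any new element
of the ground set increases the rank. -/
def IsFlat (M : FinMatroid α) (F : Finset α) : Prop :=
  F ⊆ M.E ∧ ∀ x ∈ M.E, x ∉ F → M.rk F < M.rk (insert x F)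

/-- The lattice of flats `L(M)`, as a finset. -/
noncomputable def flats (M : FinMatroid α) : Finset (Finset α) :=
  M.E.powerset.filter fun F => M.IsFlat F

/-- The proper flats, i.e. flats different from the ground set. -/
noncomputable def properFlats (M : FinMatroid α) : Finset (Finset α) :=
  M.flats.filter fun F => F ≠ M.E

/-- A matroid is loopless if every singleton of the ground set has rank one. -/
def Loopless (M : FinMatroid α) : Prop := ∀ x ∈ M.E, M.rk {x} = 1

/-- The restriction `M|F` of a matroid to a subset of its ground set. -/
def restrict (M : FinMatroid α) (F : Finset α) : FinMatroid α :=
  ⟨F, M.rk, M.rk_empty, M.rk_le_card, M.rk_mono, M.rk_submod⟩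

/-- The characteristic polynomial attached to a ground set and a rank function:
`χ(q) = ∑_{S ⊆ E} (-1)^{|S|} q^{rk E - rk S}`. -/
noncomputable def charPolyAux (E : Finset α) (rk : Finset α → ℕ) : Polynomial ℚ :=
  ∑ S ∈ E.powerset, (-1 : Polynomial ℚ) ^ S.card * X ^ (rk E - rk S)

/-- The characteristic polynomial `χ_M(q)` of a matroid. -/
noncomputable def charPoly (M : FinMatroid α) : Polynomial ℚ := charPolyAux M.E M.rk

/-- The characteristic polynomial `χ_{M/F}(q)` of the contraction of `M` at `F`. -/
noncomputable def contractCharPoly (M : FinMatroid α) (F : Finset α) : Polynomial ℚ :=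
  charPolyAux (M.E \ F) fun S => M.rk (S ∪ F) - M.rk F

/-- The reduced characteristic polynomial `χ̄(q) = χ(q)/(q-1)`. -/
noncomputable def reducedCharPoly (p : Polynomial ℚ) : Polynomial ℚ := p /ₘ (X - C 1)

/-- The value `χ̄_{M/F}(1)` of the reduced characteristic polynomial of `M/F` at `q = 1`. -/
noncomputable def redCharContractOne (M : FinMatroid α) (F : Finset α) : ℚ :=
  (reducedCharPoly (M.contractCharPoly F)).eval 1

/-- The truncation `tr(M)`, with rank function `S ↦ min (rk S) (rk M - 1)`. -/
def truncation (M : FinMatroid α) : FinMatroid α where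
  E := M.E
  rk S := min (M.rk S) (M.rk M.E - 1)
  rk_empty := by simp [M.rk_empty]
  rk_le_card S := le_trans (min_le_left _ _) (M.rk_le_card S)
  rk_mono S T h := min_le_min (M.rk_mono h) le_rfl
  rk_submod S T := by
    have h1 := M.rk_submod S T
    have h2 : M.rk S ≤ M.rk (S ∪ T) := M.rk_mono Finset.subset_union_left
    have h3 : M.rk T ≤ M.rk (S ∪ T) := M.rk_mono Finset.subset_union_right
    have h4 : M.rk (S ∩ T) ≤ M.rk S := M.rk_mono Finset.inter_subset_left
    simp only [Nat.min_def]
    split_ifs <;> omega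

/-- The direct sum `M₁ ⊕ M₂` of two matroids on disjoint ground sets. -/
def directSum (M₁ M₂ : FinMatroid α) (h : Disjoint M₁.E M₂.E) : FinMatroid α where
  E := M₁.E ∪ M₂.E
  rk S := M₁.rk (S ∩ M₁.E) + M₂.rk (S ∩ M₂.E)
  rk_empty := by simp [M₁.rk_empty, M₂.rk_empty]
  rk_le_card S := by
    have hd : Disjoint (S ∩ M₁.E) (S ∩ M₂.E) :=
      h.mono Finset.inter_subset_right Finset.inter_subset_right
    calc M₁.rk (S ∩ M₁.E) + M₂.rk (S ∩ M₂.E)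
        ≤ (S ∩ M₁.E).card + (S ∩ M₂.E).card :=
          add_le_add (M₁.rk_le_card _) (M₂.rk_le_card _)
      _ = ((S ∩ M₁.E) ∪ (S ∩ M₂.E)).card := (Finset.card_union_of_disjoint hd).symm
      _ ≤ S.card := Finset.card_le_card
          (Finset.union_subset Finset.inter_subset_left Finset.inter_subset_left)
  rk_mono S T hST :=
    add_le_add (M₁.rk_mono (Finset.inter_subset_inter hST subset_rfl))
      (M₂.rk_mono (Finset.inter_subset_inter hST subset_rfl))
  rk_submod S T := by
    have e1 : ∀ E' : Finset α, (S ∪ T) ∩ E' = (S ∩ E') ∪ (T ∩ E') := by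
      intro E'; ext x; simp only [Finset.mem_union, Finset.mem_inter]; tauto
    have e2 : ∀ E' : Finset α, (S ∩ T) ∩ E' = (S ∩ E') ∩ (T ∩ E') := by
      intro E'; ext x; simp only [Finset.mem_inter]; tauto
    simp only [e1, e2]
    have h1 := M₁.rk_submod (S ∩ M₁.E) (T ∩ M₁.E)
    have h2 := M₂.rk_submod (S ∩ M₂.E) (T ∩ M₂.E)
    omega

/-- The free matroid `U_{n,n}` on a ground set `E` with `|E| = n`. -/
def freeM (E : Finset α) : FinMatroid α where
  E := E
  rk S := (S ∩ E).card
  rk_empty := by simp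
  rk_le_card S := Finset.card_le_card Finset.inter_subset_left
  rk_mono S T h := Finset.card_le_card (Finset.inter_subset_inter h subset_rfl)
  rk_submod S T := by
    have e1 : (S ∪ T) ∩ E = (S ∩ E) ∪ (T ∩ E) := by
      ext x; simp only [Finset.mem_union, Finset.mem_inter]; tauto
    have e2 : (S ∩ T) ∩ E = (S ∩ E) ∩ (T ∩ E) := by
      ext x; simp only [Finset.mem_inter]; tauto
    simp only [e1, e2]
    exact (Finset.card_union_add_card_inter _ _).le

/-- The uniform matroid `U_{r,n}` on a ground set `E` with `|E| = n`. -/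
def uniformM (E : Finset α) (r : ℕ) : FinMatroid α where
  E := E
  rk S := min (S ∩ E).card r
  rk_empty := by simp
  rk_le_card S := le_trans (min_le_left _ _) (Finset.card_le_card Finset.inter_subset_left)
  rk_mono S T h := min_le_min (Finset.card_le_card (Finset.inter_subset_inter h subset_rfl)) le_rfl
  rk_submod S T := by
    have e1 : (S ∪ T) ∩ E = (S ∩ E) ∪ (T ∩ E) := by
      ext x; simp only [Finset.mem_union, Finset.mem_inter]; tauto
    have e2 : (S ∩ T) ∩ E = (S ∩ E) ∩ (T ∩ E) := by
      ext x; simp only [Finset.mem_inter]; tauto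
    have h3 := Finset.card_union_add_card_inter (S ∩ E) (T ∩ E)
    have h4 : (S ∩ E).card ≤ ((S ∩ E) ∪ (T ∩ E)).card :=
      Finset.card_le_card Finset.subset_union_left
    have h5 : (T ∩ E).card ≤ ((S ∩ E) ∪ (T ∩ E)).card :=
      Finset.card_le_card Finset.subset_union_right
    simp only [e1, e2, Nat.min_def]
    split_ifs <;> omega

/-- The closure `cl_M(S)` of a set in a matroid: all ground set elements whose
addition does not increase the rank. -/
def cl (M : FinMatroid α) (S : Finset α) : Finset α :=
  M.E.filter fun x => M.rk (insert x S) = M.rk S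

/-- The rank function of the free extension `M + e`. -/
def freeExtRk (M : FinMatroid α) (e : α) (S : Finset α) : ℕ :=
  if e ∈ S then
    (if M.cl (S.erase e) = M.E then M.rk (S.erase e) else M.rk (S.erase e) + 1)
  else M.rk S

/-- The free extension `M + e`, realized as the truncation of `M ⊕ U_{1,1}`. -/
def freeExtension (M : FinMatroid α) (e : α) (he : e ∉ M.E) : FinMatroid α :=
  truncation (M.directSum (freeM {e}) (Finset.disjoint_singleton_right.mpr he))

/-- Predicate expressing that `Z` is the (combinatorial) topological zeta function:
`Z` of the trivial matroid is `1` and `Z` satisfies the defining recurrence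
`Z_M(s) = (1/(|E|s + rk M)) ∑_{F proper flat} χ̄_{M/F}(1) ⬝ Z_{M|F}(s)`. -/
def IsTopZeta (Z : FinMatroid α → RatFunc ℚ) : Prop :=
  (∀ M : FinMatroid α, M.E = ∅ → Z M = 1) ∧
  (∀ M : FinMatroid α, M.E.Nonempty →
    Z M = (∑ F ∈ M.properFlats,
        RatFunc.C (M.redCharContractOne F) * Z (M.restrict F)) /
      ((M.E.card : RatFunc ℚ) * RatFunc.X + (M.rk M.E : RatFunc ℚ)))

/-- Predicate expressing that `μ M F` is the Möbius function value `μ(F, E)` in the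
lattice of flats of `M`: for every flat `F`, `∑_{G flat, F ⊆ G} μ(G,E) = δ_{F,E}`. -/
def IsFlatMobius (μ : FinMatroid α → Finset α → ℤ) : Prop :=
  ∀ (M : FinMatroid α) (F : Finset α), M.IsFlat F →
    (∑ G ∈ M.flats.filter fun G => F ⊆ G, μ M G) = if F = M.E then 1 else 0

/-- Predicate expressing that `Y` is the Möbius inversion of `Z`:
`Y_M(s) = ∑_{F ∈ L(M)} μ(F,E) Z_{M|F}(s)`. -/
def IsMobiusInv (μ : FinMatroid α → Finset α → ℤ)
    (Z Y : FinMatroid α → RatFunc ℚ) : Prop :=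
  ∀ M : FinMatroid α, Y M = ∑ F ∈ M.flats, (μ M F : RatFunc ℚ) * Z (M.restrict F)

/-- Predicate expressing that `Z` is the topological zeta function, viewed as an actual
function `ℝ → ℝ` (away from poles): base case `1` for the trivial matroid, and the
defining recurrence pointwise. -/
def IsTopZetaFun (Z : FinMatroid α → ℝ → ℝ) : Prop :=
  (∀ M : FinMatroid α, M.E = ∅ → Z M = fun _ => 1) ∧
  (∀ M : FinMatroid α, M.E.Nonempty → ∀ s : ℝ,
    Z M s = (∑ F ∈ M.properFlats, (M.redCharContractOne F : ℝ) * Z (M.restrict F) s) /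
      ((M.E.card : ℝ) * s + (M.rk M.E : ℝ)))

end FinMatroid

section AuxLemmas
open Finset Polynomial FinMatroid

variable {α : Type*} [DecidableEq α]

lemma sum_neg_one_pow_card (R : Type*) [Ring R] (x : Finset α) :
    ∑ m ∈ x.powerset, (-1 : R) ^ m.card = if x = ∅ then 1 else 0 := by
  have h := Finset.sum_powerset_neg_one_pow_card (x := x)
  have h2 : ((∑ m ∈ x.powerset, (-1 : ℤ) ^ m.card : ℤ) : R)
      = ∑ m ∈ x.powerset, (-1 : R) ^ m.card := by push_cast; rfl
  rw [← h2, h]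
  split <;> simp

lemma rk_insert_union (M : FinMatroid α) (B S : Finset α) (x : α)
    (hxS : x ∉ S) (hxB : x ∉ B) (hrk : M.rk (insert x B) = M.rk B) :
    M.rk (insert x (S ∪ B)) = M.rk (S ∪ B) := by
  have hsub := M.rk_submod (S ∪ B) (insert x B)
  have hU : (S ∪ B) ∪ insert x B = insert x (S ∪ B) := by
    ext y; simp only [Finset.mem_insert, Finset.mem_union]; tauto
  have hI : (S ∪ B) ∩ insert x B = B := by
    ext y
    simp only [Finset.mem_inter, Finset.mem_union, Finset.mem_insert]
    constructor
    · rintro ⟨h1, rfl | h2⟩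
      · tauto
      · exact h2
    · intro hy; tauto
  rw [hU, hI, hrk] at hsub
  have := M.rk_mono (Finset.subset_insert x (S ∪ B))
  omega

/-- Inner sum vanishes when `B` is not closed. -/
lemma inner_eq_zero (M : FinMatroid α) (B : Finset α) (x : α) (hx : x ∈ M.E)
    (hxB : x ∉ B) (hrk : M.rk (insert x B) = M.rk B) :
    ∑ S ∈ (M.E \ B).powerset,
      (-1 : Polynomial ℚ) ^ S.card * X ^ (M.rk M.E - M.rk (S ∪ B)) = 0 := by
  have hxEB : x ∈ M.E \ B := Finset.mem_sdiff.mpr ⟨hx, hxB⟩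
  rw [← Finset.insert_erase hxEB,
    Finset.sum_powerset_insert (Finset.notMem_erase x _), ← Finset.sum_add_distrib]
  apply Finset.sum_eq_zero
  intro S hS
  have hxS : x ∉ S := fun hmem =>
    Finset.notMem_erase x _ ((Finset.mem_powerset.mp hS) hmem)
  have hcard : (insert x S).card = S.card + 1 := Finset.card_insert_of_notMem hxS
  have hrk2 : M.rk (insert x S ∪ B) = M.rk (S ∪ B) := by
    rw [Finset.insert_union]
    exact rk_insert_union M B S x hxS hxB hrk
  rw [hcard, hrk2, pow_succ]
  ring

/-- The key double-sum identity. -/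
lemma flat_sum (M : FinMatroid α) (F : Finset α) (hFE : F ⊆ M.E) :
    ∑ F' ∈ M.E.powerset.filter (fun B => F ⊆ B ∧ M.IsFlat B),
      ∑ S ∈ (M.E \ F').powerset,
        (-1 : Polynomial ℚ) ^ S.card * X ^ (M.rk M.E - M.rk (S ∪ F'))
    = X ^ (M.rk M.E - M.rk F) := by
  have h1 : ∑ F' ∈ M.E.powerset.filter (fun B => F ⊆ B ∧ M.IsFlat B),
      ∑ S ∈ (M.E \ F').powerset,
        (-1 : Polynomial ℚ) ^ S.card * X ^ (M.rk M.E - M.rk (S ∪ F'))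
      = ∑ F' ∈ M.E.powerset.filter (fun B => F ⊆ B),
      ∑ S ∈ (M.E \ F').powerset,
        (-1 : Polynomial ℚ) ^ S.card * X ^ (M.rk M.E - M.rk (S ∪ F')) := by
    apply Finset.sum_subset
    · intro B hB
      simp only [Finset.mem_filter, Finset.mem_powerset] at hB ⊢
      exact ⟨hB.1, hB.2.1⟩
    · intro B hB hB2
      simp only [Finset.mem_filter, Finset.mem_powerset] at hB hB2
      have hBE : B ⊆ M.E := hB.1
      have hnotflat : ¬ M.IsFlat B := fun h => hB2 ⟨hB.1, hB.2, h⟩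
      rw [FinMatroid.IsFlat] at hnotflat
      push_neg at hnotflat
      obtain ⟨x, hx, hxB, hle⟩ := hnotflat hBE
      have heq : M.rk (insert x B) = M.rk B :=
        le_antisymm hle (M.rk_mono (Finset.subset_insert x B))
      exact inner_eq_zero M B x hx hxB heq
  rw [h1]
  have h2 : ∑ F' ∈ M.E.powerset.filter (fun B => F ⊆ B),
      ∑ S ∈ (M.E \ F').powerset,
        (-1 : Polynomial ℚ) ^ S.card * X ^ (M.rk M.E - M.rk (S ∪ F'))
      = ∑ A ∈ M.E.powerset.filter (fun A => F ⊆ A),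
      ∑ S ∈ (A \ F).powerset,
        (-1 : Polynomial ℚ) ^ S.card * X ^ (M.rk M.E - M.rk A) := by
    rw [Finset.sum_sigma', Finset.sum_sigma']
    apply Finset.sum_nbij' (fun p => (⟨p.1 ∪ p.2, p.2⟩ : Σ _ : Finset α, Finset α))
      (fun p => (⟨p.1 \ p.2, p.2⟩ : Σ _ : Finset α, Finset α))
    · rintro ⟨B, S⟩ h
      simp only [Finset.mem_sigma, Finset.mem_filter, Finset.mem_powerset] at h ⊢
      obtain ⟨⟨hBE, hFB⟩, hS⟩ := h
      refine ⟨⟨Finset.union_subset hBE (hS.trans (Finset.sdiff_subset)), 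
        hFB.trans Finset.subset_union_left⟩, ?_⟩
      intro y hy
      have := hS hy
      rw [Finset.mem_sdiff] at this
      exact Finset.mem_sdiff.mpr ⟨Finset.mem_union_right _ hy, fun hyF => this.2 (hFB hyF)⟩
    · rintro ⟨A, S⟩ h
      simp only [Finset.mem_sigma, Finset.mem_filter, Finset.mem_powerset] at h ⊢
      obtain ⟨⟨hAE, hFA⟩, hS⟩ := h
      refine ⟨⟨(Finset.sdiff_subset).trans hAE, ?_⟩, ?_⟩
      · intro y hy
        refine Finset.mem_sdiff.mpr ⟨hFA hy, fun hyS => ?_⟩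
        exact (Finset.mem_sdiff.mp (hS hyS)).2 hy
      · intro y hy
        refine Finset.mem_sdiff.mpr ⟨hAE ((Finset.mem_sdiff.mp (hS hy)).1), fun hmem => ?_⟩
        exact (Finset.mem_sdiff.mp hmem).2 hy
    · rintro ⟨B, S⟩ h
      simp only [Finset.mem_sigma, Finset.mem_filter, Finset.mem_powerset] at h
      have : (B ∪ S) \ S = B := by
        ext y
        simp only [Finset.mem_sdiff, Finset.mem_union]
        constructor
        · tauto
        · intro hy
          exact ⟨Or.inl hy, fun hyS => (Finset.mem_sdiff.mp (h.2 hyS)).2 hy⟩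
      simp [this]
    · rintro ⟨A, S⟩ h
      simp only [Finset.mem_sigma, Finset.mem_filter, Finset.mem_powerset] at h
      have : (A \ S) ∪ S = A := by
        ext y
        simp only [Finset.mem_sdiff, Finset.mem_union]
        constructor
        · rintro (hy | hy)
          · exact hy.1
          · exact (Finset.mem_sdiff.mp (h.2 hy)).1
        · intro hy
          by_cases hyS : y ∈ S <;> tauto
      simp [this]
    · rintro ⟨B, S⟩ h
      simp only [Finset.union_comm S B]
  rw [h2]
  have h3 : ∀ A ∈ M.E.powerset.filter (fun A => F ⊆ A),
      (∑ S ∈ (A \ F).powerset,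
        (-1 : Polynomial ℚ) ^ S.card * X ^ (M.rk M.E - M.rk A))
      = if A = F then X ^ (M.rk M.E - M.rk F) else 0 := by
    intro A hA
    simp only [Finset.mem_filter, Finset.mem_powerset] at hA
    rw [← Finset.sum_mul, sum_neg_one_pow_card]
    by_cases hAF : A = F
    · subst hAF
      simp
    · have : ¬ A \ F = ∅ := by
        rw [Finset.sdiff_eq_empty_iff_subset]
        exact fun hsub => hAF (Finset.Subset.antisymm hsub hA.2)
      rw [if_neg this, if_neg hAF, zero_mul]
  rw [Finset.sum_congr rfl h3, Finset.sum_ite_eq' _ F]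
  rw [if_pos (Finset.mem_filter.mpr ⟨Finset.mem_powerset.mpr hFE, Finset.Subset.refl F⟩)]

end AuxLemmas

section AuxLemmas2
open Finset Polynomial FinMatroid

variable {α : Type*} [DecidableEq α]

/-- The contraction's characteristic polynomial, rewritten. -/
lemma contractCharPoly_eq (M : FinMatroid α) (F' : Finset α) (hsub : F' ⊆ M.E) :
    M.contractCharPoly F' = ∑ S ∈ (M.E \ F').powerset,
      (-1 : Polynomial ℚ) ^ S.card * X ^ (M.rk M.E - M.rk (S ∪ F')) := by
  have hE : M.E \ F' ∪ F' = M.E := Finset.sdiff_union_of_subset hsub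
  simp only [FinMatroid.contractCharPoly, FinMatroid.charPolyAux, hE]
  apply Finset.sum_congr rfl
  intro S hS
  rw [Finset.mem_powerset] at hS
  congr 1
  congr 1
  have h1 : M.rk F' ≤ M.rk (S ∪ F') := M.rk_mono Finset.subset_union_right
  have h2 : M.rk (S ∪ F') ≤ M.rk M.E :=
    M.rk_mono (Finset.union_subset (hS.trans Finset.sdiff_subset) hsub)
  omega

lemma contract_eval_one (M : FinMatroid α) (F' : Finset α) (hsub : F' ⊆ M.E)
    (hne : F' ≠ M.E) : (M.contractCharPoly F').eval 1 = 0 := by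
  rw [contractCharPoly_eq M F' hsub]
  rw [Polynomial.eval_finset_sum]
  simp only [Polynomial.eval_mul, Polynomial.eval_pow, Polynomial.eval_neg,
    Polynomial.eval_one, Polynomial.eval_X, one_pow, mul_one]
  rw [sum_neg_one_pow_card]
  rw [if_neg]
  intro h
  rw [Finset.sdiff_eq_empty_iff_subset] at h
  exact hne (Finset.Subset.antisymm hsub h)

lemma reduced_mul (M : FinMatroid α) (F' : Finset α) (hsub : F' ⊆ M.E)
    (hne : F' ≠ M.E) :
    reducedCharPoly (M.contractCharPoly F') * (X - C 1) = M.contractCharPoly F' := by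
  have h := Polynomial.modByMonic_add_div (M.contractCharPoly F')
    (X - C (1 : ℚ))
  rw [Polynomial.modByMonic_X_sub_C_eq_C_eval, contract_eval_one M F' hsub hne,
    Polynomial.C_0, zero_add] at h
  rw [FinMatroid.reducedCharPoly, mul_comm]
  exact h

end AuxLemmas2
open Polynomial FinMatroid in
/-- for a flat `F` of a loopless matroid `M` of rank `r`, the `q`-analogue
`[r - rk F]_q = 1 + q + ⋯ + q^{r-rk F-1}` equals the sum of the reduced characteristic
polynomials `χ̄_{M/F'}(q)` over proper flats `F'` containing `F`. -/
theorem qAnalogue_eq_sum_reducedCharPoly {α : Type*} [DecidableEq α]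
    (M : FinMatroid α) (hL : M.Loopless) (F : Finset α) (hF : M.IsFlat F) :
    ∑ i ∈ Finset.range (M.rk M.E - M.rk F), (X : Polynomial ℚ) ^ i =
      ∑ F' ∈ M.properFlats.filter (fun F' => F ⊆ F'),
        reducedCharPoly (M.contractCharPoly F') := by
  classical
  have hFE : F ⊆ M.E := hF.1
  have hEflat : M.IsFlat M.E := ⟨Finset.Subset.refl _, fun x hx hnx => absurd hx hnx⟩
  have hsetEq : M.E.powerset.filter (fun B => F ⊆ B ∧ M.IsFlat B)
      = insert M.E (M.properFlats.filter (fun F' => F ⊆ F')) := by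
    ext B
    simp only [Finset.mem_filter, Finset.mem_powerset, Finset.mem_insert,
      FinMatroid.properFlats, FinMatroid.flats]
    constructor
    · rintro ⟨hBE, hFB, hflat⟩
      by_cases hB : B = M.E
      · exact Or.inl hB
      · exact Or.inr ⟨⟨⟨hBE, hflat⟩, hB⟩, hFB⟩
    · rintro (rfl | ⟨⟨⟨hBp, hflat⟩, _⟩, hFB⟩)
      · exact ⟨Finset.Subset.refl _, hFE, hEflat⟩
      · exact ⟨hBp, hFB, hflat⟩
  have hEnotmem : M.E ∉ M.properFlats.filter (fun F' => F ⊆ F') := by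
    simp [FinMatroid.properFlats]
  have hkey := flat_sum M F hFE
  rw [hsetEq, Finset.sum_insert hEnotmem] at hkey
  have hEterm : ∑ S ∈ (M.E \ M.E).powerset,
      (-1 : Polynomial ℚ) ^ S.card * X ^ (M.rk M.E - M.rk (S ∪ M.E)) = 1 := by
    simp
  rw [hEterm] at hkey
  have hmem : ∀ F' ∈ M.properFlats.filter (fun F' => F ⊆ F'), F' ⊆ M.E ∧ F' ≠ M.E := by
    intro F' hF'
    simp only [Finset.mem_filter, Finset.mem_powerset,
      FinMatroid.properFlats, FinMatroid.flats] at hF'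
    exact ⟨hF'.1.1.1, hF'.1.2⟩
  have hsum : ∑ F' ∈ M.properFlats.filter (fun F' => F ⊆ F'), M.contractCharPoly F'
      = X ^ (M.rk M.E - M.rk F) - 1 := by
    rw [Finset.sum_congr rfl (fun F' hF' => contractCharPoly_eq M F' (hmem F' hF').1)]
    rw [← hkey]
    ring
  have hterm : ∀ F' ∈ M.properFlats.filter (fun F' => F ⊆ F'),
      reducedCharPoly (M.contractCharPoly F') * (X - C 1) = M.contractCharPoly F' :=
    fun F' hF' => reduced_mul M F' (hmem F' hF').1 (hmem F' hF').2
  apply mul_right_cancel₀ (Polynomial.X_sub_C_ne_zero (1 : ℚ))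
  rw [Polynomial.C_1] at hterm ⊢
  rw [geom_sum_mul]
  conv_rhs => rw [Finset.sum_mul, Finset.sum_congr rfl hterm]
  rw [hsum]
end

section
/- Let M be a loopless matroid on finite ground set E of rank r with girth g > 0, i.e., every circuit of M has size ≥ g. Then for all integers 0 ≤ k < g, the k-th derivative of the topological zeta function at s = 0 satisfies (d^k/ds^k Z^⊤_M)(0) = (−1)^k · |E|·(|E|+1)···(|E|+k−1), the signed rising factorial. -/
open scoped Classical
open Polynomial

namespace FinMatroid

variable {α : Type*} [DecidableEq α] (M : FinMatroid α)

lemma rk_insert_le (x : α) (S : Finset α) : M.rk (insert x S) ≤ M.rk S + 1 := by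
  have h := M.rk_submod S {x}
  have h1 : M.rk {x} ≤ 1 := by simpa using M.rk_le_card {x}
  have h2 : S ∪ {x} = insert x S := by ext y; simp [or_comm]
  rw [h2] at h
  omega

lemma mem_flats_iff {F : Finset α} : F ∈ M.flats ↔ M.IsFlat F := by
  simp only [flats, Finset.mem_filter, Finset.mem_powerset]
  exact ⟨fun h => h.2, fun h => ⟨h.1, h⟩⟩

lemma ground_mem_flats : M.E ∈ M.flats :=
  M.mem_flats_iff.mpr ⟨Finset.Subset.refl _, fun x _ hx => absurd hx (by simp_all)⟩

lemma flat_subset_ground {F : Finset α} (hF : F ∈ M.flats) : F ⊆ M.E :=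
  (M.mem_flats_iff.mp hF).1

lemma mem_cl {S : Finset α} {x : α} :
    x ∈ M.cl S ↔ x ∈ M.E ∧ M.rk (insert x S) = M.rk S := Finset.mem_filter

lemma cl_subset_ground (S : Finset α) : M.cl S ⊆ M.E := Finset.filter_subset _ _

lemma subset_cl {S : Finset α} (h : S ⊆ M.E) : S ⊆ M.cl S := by
  intro x hx
  exact M.mem_cl.mpr ⟨h hx, by rw [Finset.insert_eq_self.mpr hx]⟩

lemma rk_union_eq (S : Finset α) {T : Finset α}
    (h : ∀ x ∈ T, M.rk (insert x S) = M.rk S) : M.rk (S ∪ T) = M.rk S := by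
  classical
  induction T using Finset.induction_on with
  | empty => rw [Finset.union_empty]
  | @insert y T hy IH =>
    have hS : M.rk (S ∪ T) = M.rk S := IH (fun x hx => h x (Finset.mem_insert_of_mem hx))
    have hyS : M.rk (insert y S) = M.rk S := h y (Finset.mem_insert_self y T)
    have hsub := M.rk_submod (insert y S) (S ∪ T)
    have he : (insert y S) ∪ (S ∪ T) = S ∪ insert y T := by ext z; simp only [Finset.mem_union, Finset.mem_insert]; tauto
    rw [he] at hsub
    have h1 : M.rk S ≤ M.rk ((insert y S) ∩ (S ∪ T)) :=
      M.rk_mono (Finset.subset_inter (Finset.subset_insert _ _) Finset.subset_union_left)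
    have h2 : M.rk S ≤ M.rk (S ∪ insert y T) := M.rk_mono Finset.subset_union_left
    omega

lemma rk_cl {S : Finset α} (h : S ⊆ M.E) : M.rk (M.cl S) = M.rk S := by
  have h1 : S ∪ M.cl S = M.cl S := Finset.union_eq_right.mpr (M.subset_cl h)
  rw [← h1]
  exact M.rk_union_eq S (fun x hx => (M.mem_cl.mp hx).2)

lemma rk_insert_of_not_mem_cl {S : Finset α} {x : α} (hxE : x ∈ M.E) (hx : x ∉ M.cl S) :
    M.rk (insert x S) = M.rk S + 1 := by
  have h1 : M.rk (insert x S) ≠ M.rk S := fun he => hx (M.mem_cl.mpr ⟨hxE, he⟩)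
  have h2 := M.rk_insert_le x S
  have h3 := M.rk_mono (Finset.subset_insert x S)
  omega

lemma cl_mem_flats {S : Finset α} (h : S ⊆ M.E) : M.cl S ∈ M.flats := by
  refine M.mem_flats_iff.mpr ⟨M.cl_subset_ground S, fun x hxE hxn => ?_⟩
  have h1 : M.rk (insert x S) = M.rk S + 1 := M.rk_insert_of_not_mem_cl hxE hxn
  have h2 : M.rk (insert x S) ≤ M.rk (insert x (M.cl S)) :=
    M.rk_mono (Finset.insert_subset_insert _ (M.subset_cl h))
  rw [M.rk_cl h]
  omega

lemma cl_subset_flat_iff {F S : Finset α} (hF : M.IsFlat F) (hS : S ⊆ M.E) :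
    M.cl S ⊆ F ↔ S ⊆ F := by
  constructor
  · exact fun h => (M.subset_cl hS).trans h
  · intro h x hx
    obtain ⟨hxE, hxr⟩ := M.mem_cl.mp hx
    by_contra hxF
    have hflat := hF.2 x hxE hxF
    have hsub := M.rk_submod (insert x S) F
    have he : (insert x S) ∪ F = insert x F := by
      ext z
      simp only [Finset.mem_union, Finset.mem_insert]
      constructor
      · rintro ((rfl | hz) | hz)
        · exact Or.inl rfl
        · exact Or.inr (h hz)
        · exact Or.inr hz
      · rintro (rfl | hz)
        · exact Or.inl (Or.inl rfl)
        · exact Or.inr hz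
    rw [he] at hsub
    have h1 : M.rk S ≤ M.rk ((insert x S) ∩ F) :=
      M.rk_mono (Finset.subset_inter (Finset.subset_insert _ _) h)
    omega

lemma rk_le_ground {S : Finset α} (h : S ⊆ M.E) : M.rk S ≤ M.rk M.E := M.rk_mono h

end FinMatroid
namespace FinMatroid

variable {α : Type*} [DecidableEq α] (M : FinMatroid α)

/-- Alternating-sum formula value `χ̄_{M/F}(1)`, extended to all subsets. -/
noncomputable def cval (F : Finset α) : ℚ :=
  ∑ S ∈ (M.E \ F).powerset, (-1 : ℚ) ^ S.card * ((M.rk M.E : ℚ) - M.rk (S ∪ F))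

lemma alt_sum_q (x : Finset α) :
    (∑ m ∈ x.powerset, (-1 : ℚ) ^ m.card) = if x = ∅ then 1 else 0 := by
  have h := Finset.sum_powerset_neg_one_pow_card (x := x)
  exact_mod_cast h

lemma cval_ground : M.cval M.E = 0 := by
  simp [cval, Finset.sdiff_self, Finset.powerset_empty]

lemma redCharContractOne_eq_cval {F : Finset α} (hF : F ∈ M.properFlats) :
    M.redCharContractOne F = M.cval F := by
  obtain ⟨hFf, hFne⟩ := Finset.mem_filter.mp hF
  have hFE : F ⊆ M.E := M.flat_subset_ground hFf
  have hne : (M.E \ F).Nonempty := by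
    rw [Finset.sdiff_nonempty]
    intro hEF
    exact hFne (Finset.Subset.antisymm hFE hEF)
  set r := M.rk M.E with hr
  -- the contraction char poly
  have hEu : (M.E \ F) ∪ F = M.E := Finset.sdiff_union_of_subset hFE
  have hexp : ∀ S ∈ (M.E \ F).powerset,
      (M.rk ((M.E \ F) ∪ F) - M.rk F) - (M.rk (S ∪ F) - M.rk F) = r - M.rk (S ∪ F) := by
    intro S hS
    have h1 : M.rk F ≤ M.rk (S ∪ F) := M.rk_mono Finset.subset_union_right
    have h2 : M.rk (S ∪ F) ≤ r := by
      refine M.rk_mono (Finset.union_subset ?_ hFE)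
      exact (Finset.mem_powerset.mp hS).trans (Finset.sdiff_subset)
    rw [hEu]
    omega
  have hp : M.contractCharPoly F
      = ∑ S ∈ (M.E \ F).powerset, (-1 : Polynomial ℚ) ^ S.card * X ^ (r - M.rk (S ∪ F)) := by
    unfold contractCharPoly charPolyAux
    exact Finset.sum_congr rfl (fun S hS => by rw [hexp S hS])
  have heval1 : (M.contractCharPoly F).eval 1 = 0 := by
    rw [hp]
    rw [Polynomial.eval_finset_sum]
    simp only [Polynomial.eval_mul, Polynomial.eval_pow, Polynomial.eval_neg,
      Polynomial.eval_one, Polynomial.eval_X, one_pow, mul_one]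
    rw [alt_sum_q]
    exact if_neg (Finset.nonempty_iff_ne_empty.mp hne)
  -- derivative evaluation
  have hderiv : (Polynomial.derivative (M.contractCharPoly F)).eval 1
      = ∑ S ∈ (M.E \ F).powerset, (-1 : ℚ) ^ S.card * ((r : ℚ) - M.rk (S ∪ F)) := by
    rw [hp, Polynomial.derivative_sum, Polynomial.eval_finset_sum]
    refine Finset.sum_congr rfl (fun S hS => ?_)
    have hC : ((-1 : Polynomial ℚ)) ^ S.card = Polynomial.C ((-1 : ℚ) ^ S.card) := by
      rw [map_pow, map_neg, map_one]
    rw [hC, Polynomial.derivative_C_mul, Polynomial.derivative_X_pow]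
    simp only [Polynomial.eval_mul, Polynomial.eval_C, Polynomial.eval_pow, Polynomial.eval_X,
      Polynomial.eval_natCast, one_pow, mul_one]
    have h2 : M.rk (S ∪ F) ≤ r := by
      refine M.rk_mono (Finset.union_subset ?_ hFE)
      exact (Finset.mem_powerset.mp hS).trans (Finset.sdiff_subset)
    rw [Nat.cast_sub h2]
  -- division relation
  have hmod : (M.contractCharPoly F) %ₘ (X - Polynomial.C 1) = 0 := by
    rw [Polynomial.modByMonic_X_sub_C_eq_C_eval, heval1, map_zero]
  have hdvd : M.contractCharPoly F
      = (X - Polynomial.C 1) * ((M.contractCharPoly F) /ₘ (X - Polynomial.C 1)) := by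
    conv_lhs => rw [← Polynomial.modByMonic_add_div (M.contractCharPoly F)
      (X - Polynomial.C 1)]
    rw [hmod, zero_add]
  have key : (Polynomial.derivative (M.contractCharPoly F)).eval 1
      = ((M.contractCharPoly F) /ₘ (X - Polynomial.C 1)).eval 1 := by
    conv_lhs => rw [hdvd]
    rw [Polynomial.derivative_mul]
    simp [Polynomial.derivative_sub]
  unfold redCharContractOne reducedCharPoly
  rw [← key, hderiv]
  rfl

end FinMatroid
namespace FinMatroid

variable {α : Type*} [DecidableEq α] (M : FinMatroid α)

/-- The "Whitney" matrix entries. -/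
noncomputable def Wfun (F H : Finset α) : ℚ :=
  ∑ S ∈ (M.E \ F).powerset.filter (fun S => M.cl (S ∪ F) = H), (-1 : ℚ) ^ S.card

end FinMatroid

/-- The zeta (containment indicator) matrix entries. -/
noncomputable def FinMatroid.zind {α : Type*} [DecidableEq α] (F H : Finset α) : ℚ :=
  if F ⊆ H then 1 else 0

namespace FinMatroid

variable {α : Type*} [DecidableEq α] (M : FinMatroid α)

lemma sum_Wfun {F : Finset α} (hF : F ⊆ M.E) (v : Finset α → ℚ) :
    ∑ H ∈ M.flats, v H * M.Wfun F H
      = ∑ S ∈ (M.E \ F).powerset, (-1 : ℚ) ^ S.card * v (M.cl (S ∪ F)) := by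
  have hmap : ∀ S ∈ (M.E \ F).powerset, M.cl (S ∪ F) ∈ M.flats := fun S hS =>
    M.cl_mem_flats (Finset.union_subset
      ((Finset.mem_powerset.mp hS).trans Finset.sdiff_subset) hF)
  rw [← Finset.sum_fiberwise_of_maps_to hmap
    (fun S => (-1 : ℚ) ^ S.card * v (M.cl (S ∪ F)))]
  refine Finset.sum_congr rfl fun H _ => ?_
  rw [Wfun, Finset.mul_sum]
  refine Finset.sum_congr rfl fun S hS => ?_
  rw [(Finset.mem_filter.mp hS).2]
  ring

lemma WZ_entry {F K : Finset α} (hF : F ∈ M.flats) (hK : K ∈ M.flats) :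
    ∑ H ∈ M.flats, M.Wfun F H * zind H K = if F = K then 1 else 0 := by
  have hFE := M.flat_subset_ground hF
  have hKE := M.flat_subset_ground hK
  have h1 : ∑ H ∈ M.flats, M.Wfun F H * zind H K
      = ∑ S ∈ (M.E \ F).powerset, (-1 : ℚ) ^ S.card * zind (M.cl (S ∪ F)) K := by
    rw [← M.sum_Wfun hFE (fun H => zind H K)]
    exact Finset.sum_congr rfl fun H _ => mul_comm _ _
  have h2 : ∀ S ∈ (M.E \ F).powerset,
      zind (M.cl (S ∪ F)) K = if S ∪ F ⊆ K then 1 else 0 := by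
    intro S hS
    have hSE : S ∪ F ⊆ M.E := Finset.union_subset
      ((Finset.mem_powerset.mp hS).trans Finset.sdiff_subset) hFE
    unfold zind
    congr 1
    simp only [eq_iff_iff]
    exact M.cl_subset_flat_iff (M.mem_flats_iff.mp hK) hSE
  rw [h1]
  by_cases hFK : F ⊆ K
  · have h3 : ∀ S ∈ (M.E \ F).powerset,
        (-1 : ℚ) ^ S.card * zind (M.cl (S ∪ F)) K
          = if S ∪ F ⊆ K then (-1 : ℚ) ^ S.card else 0 := by
      intro S hS
      rw [h2 S hS]
      split <;> simp
    rw [Finset.sum_congr rfl h3, ← Finset.sum_filter]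
    have h4 : (M.E \ F).powerset.filter (fun S => S ∪ F ⊆ K) = (K \ F).powerset := by
      ext S
      simp only [Finset.mem_filter, Finset.mem_powerset, Finset.subset_sdiff,
        Finset.union_subset_iff]
      constructor
      · rintro ⟨⟨hSE, hSF⟩, hSK, _⟩
        exact ⟨hSK, hSF⟩
      · rintro ⟨hSK, hSF⟩
        exact ⟨⟨hSK.trans hKE, hSF⟩, hSK, hFK⟩
    rw [h4, alt_sum_q]
    have h5 : K \ F = ∅ ↔ F = K := by
      rw [Finset.sdiff_eq_empty_iff_subset]
      exact ⟨fun h => Finset.Subset.antisymm hFK h, fun h => h ▸ Finset.Subset.refl _⟩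
    simp only [h5]
  · have h3 : ∀ S ∈ (M.E \ F).powerset,
        (-1 : ℚ) ^ S.card * zind (M.cl (S ∪ F)) K = 0 := by
      intro S hS
      rw [h2 S hS, if_neg, mul_zero]
      intro hc
      exact hFK (Finset.subset_union_right.trans hc)
    rw [Finset.sum_congr rfl h3, Finset.sum_const_zero]
    have hne : F ≠ K := fun h => hFK (by rw [h])
    rw [if_neg hne]

lemma ZW_entry {G H : Finset α} (hG : G ∈ M.flats) (hH : H ∈ M.flats) :
    ∑ F ∈ M.flats, zind G F * M.Wfun F H = if G = H then 1 else 0 := by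
  classical
  let Wm : Matrix {F // F ∈ M.flats} {F // F ∈ M.flats} ℚ := fun F K => M.Wfun F.1 K.1
  let Zm : Matrix {F // F ∈ M.flats} {F // F ∈ M.flats} ℚ := fun F K => zind F.1 K.1
  have hWZ : Wm * Zm = 1 := by
    ext F K
    rw [Matrix.mul_apply, Matrix.one_apply]
    have h1 : ∑ J : {F // F ∈ M.flats}, Wm F J * Zm J K
        = ∑ J ∈ M.flats, M.Wfun F.1 J * zind J K.1 :=
      Finset.sum_coe_sort M.flats (fun J => M.Wfun F.1 J * zind J K.1)
    rw [h1, M.WZ_entry F.2 K.2]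
    rcases eq_or_ne F K with h | h
    · subst h; rw [if_pos rfl, if_pos rfl]
    · rw [if_neg h, if_neg (fun e => h (Subtype.ext e))]
  have hZW : Zm * Wm = 1 := mul_eq_one_comm.mpr hWZ
  have h2 : (Zm * Wm) ⟨G, hG⟩ ⟨H, hH⟩ = (1 : Matrix {F // F ∈ M.flats} {F // F ∈ M.flats} ℚ) ⟨G, hG⟩ ⟨H, hH⟩ := by rw [hZW]
  rw [Matrix.mul_apply, Matrix.one_apply] at h2
  have h3 : ∑ J : {F // F ∈ M.flats}, Zm ⟨G, hG⟩ J * Wm J ⟨H, hH⟩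
      = ∑ J ∈ M.flats, zind G J * M.Wfun J H :=
    Finset.sum_coe_sort M.flats (fun J => zind G J * M.Wfun J H)
  rw [h3] at h2
  rw [h2]
  simp [Subtype.ext_iff]

/-- Key identity: the cumulative sums of `χ̄_{M/F}(1)` over flats containing `T`. -/
lemma sum_cval_flats_supset {T : Finset α} (hT : T ⊆ M.E) :
    ∑ F ∈ M.flats.filter (fun F => T ⊆ F), M.cval F
      = (M.rk M.E : ℚ) - M.rk T := by
  classical
  have hclT : M.cl T ∈ M.flats := M.cl_mem_flats hT
  have hcval : ∀ F ∈ M.flats,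
      M.cval F = ∑ H ∈ M.flats, ((M.rk M.E : ℚ) - M.rk H) * M.Wfun F H := by
    intro F hF
    rw [cval, M.sum_Wfun (M.flat_subset_ground hF)]
    refine Finset.sum_congr rfl fun S hS => ?_
    have hSE : S ∪ F ⊆ M.E := Finset.union_subset
      ((Finset.mem_powerset.mp hS).trans Finset.sdiff_subset) (M.flat_subset_ground hF)
    rw [M.rk_cl hSE]
  have hfilter : M.flats.filter (fun F => T ⊆ F) = M.flats.filter (fun F => M.cl T ⊆ F) := by
    refine Finset.filter_congr fun F hF => ?_
    exact Iff.symm (M.cl_subset_flat_iff (M.mem_flats_iff.mp hF) hT)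
  rw [hfilter, Finset.sum_filter]
  have hstep : ∀ F ∈ M.flats, (if M.cl T ⊆ F then M.cval F else 0)
      = ∑ H ∈ M.flats, ((M.rk M.E : ℚ) - M.rk H) * (zind (M.cl T) F * M.Wfun F H) := by
    intro F hF
    by_cases h : M.cl T ⊆ F
    · rw [if_pos h, hcval F hF]
      refine Finset.sum_congr rfl fun H _ => ?_
      rw [zind, if_pos h, one_mul]
    · rw [if_neg h]
      refine Eq.symm (Finset.sum_eq_zero fun H _ => ?_)
      rw [zind, if_neg h, zero_mul, mul_zero]
  rw [Finset.sum_congr rfl hstep, Finset.sum_comm]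
  have hstep2 : ∀ H ∈ M.flats,
      (∑ F ∈ M.flats, ((M.rk M.E : ℚ) - M.rk H) * (zind (M.cl T) F * M.Wfun F H))
        = if M.cl T = H then (M.rk M.E : ℚ) - M.rk H else 0 := by
    intro H hH
    rw [← Finset.mul_sum, M.ZW_entry hclT hH]
    split <;> simp
  rw [Finset.sum_congr rfl hstep2, Finset.sum_ite_eq M.flats (M.cl T)
    (fun H => (M.rk M.E : ℚ) - M.rk H), if_pos hclT, M.rk_cl hT]

end FinMatroid
namespace FinMatroid

/-- Forward difference operator on sequences. -/
def fdiff (f : ℕ → ℚ) : ℕ → ℚ := fun m => f (m + 1) - f m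

lemma fdiff_iter_zero_fun : ∀ t : ℕ, fdiff^[t] (fun _ => (0 : ℚ)) = fun _ => 0
  | 0 => rfl
  | t + 1 => by
    rw [Function.iterate_succ_apply]
    have h : fdiff (fun _ => (0 : ℚ)) = fun _ => 0 := by funext m; simp [fdiff]
    rw [h, fdiff_iter_zero_fun t]

lemma fdiff_iter_const_mul (c : ℚ) : ∀ (t : ℕ) (f : ℕ → ℚ),
    fdiff^[t] (fun m => c * f m) = fun m => c * fdiff^[t] f m
  | 0, f => rfl
  | t + 1, f => by
    have h : fdiff (fun m => c * f m) = fun m => c * fdiff f m := by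
      funext m; simp [fdiff]; ring
    rw [Function.iterate_succ_apply, h, fdiff_iter_const_mul c t (fdiff f),
      ← Function.iterate_succ_apply]

/-- Newton's forward-difference formula, over powersets. -/
lemma newton {α : Type*} [DecidableEq α] (s : Finset α) : ∀ f : ℕ → ℚ,
    ∑ T ∈ s.powerset, fdiff^[T.card] f 0 = f s.card := by
  classical
  induction s using Finset.induction_on with
  | empty => intro f; simp
  | @insert x s hx IH =>
    intro f
    rw [Finset.sum_powerset_insert hx]
    have h1 : ∀ t ∈ s.powerset, fdiff^[(insert x t).card] f 0 = fdiff^[t.card] (fdiff f) 0 := by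
      intro t ht
      rw [Finset.card_insert_of_notMem (fun hxt => hx ((Finset.mem_powerset.mp ht) hxt)),
        Function.iterate_succ_apply]
    rw [IH f, Finset.sum_congr rfl h1, IH (fdiff f), Finset.card_insert_of_notMem hx]
    show f s.card + (f (s.card + 1) - f s.card) = f (s.card + 1)
    ring

lemma asc_succ_diff (x k : ℕ) :
    (x + 1).ascFactorial (k + 1) = x.ascFactorial (k + 1) + (k + 1) * (x + 1).ascFactorial k := by
  have h1 : x.ascFactorial (k + 1) = x * (x + 1).ascFactorial k := by
    rw [Nat.ascFactorial_succ, ← Nat.succ_ascFactorial]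
  rw [Nat.ascFactorial_succ, h1]
  ring

lemma fdiff_asc (k a : ℕ) :
    fdiff (fun m => (((m + a).ascFactorial (k + 1) : ℕ) : ℚ))
      = fun m => ((k : ℚ) + 1) * (((m + a + 1).ascFactorial k : ℕ) : ℚ) := by
  funext m
  show (((m + 1 + a).ascFactorial (k + 1) : ℕ) : ℚ) - ((m + a).ascFactorial (k + 1) : ℚ) = _
  have he : m + 1 + a = (m + a) + 1 := by omega
  rw [he, asc_succ_diff (m + a) k]
  push_cast
  ring

lemma fdiff_iter_asc_eq_zero : ∀ (k t a : ℕ), k < t →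
    fdiff^[t] (fun m => (((m + a).ascFactorial k : ℕ) : ℚ)) 0 = 0 := by
  intro k
  induction k with
  | zero =>
    intro t a ht
    obtain ⟨t', rfl⟩ : ∃ t', t = t' + 1 := ⟨t - 1, by omega⟩
    rw [Function.iterate_succ_apply]
    have h : fdiff (fun m => (((m + a).ascFactorial 0 : ℕ) : ℚ)) = fun _ => 0 := by
      funext m; simp [fdiff, Nat.ascFactorial_zero]
    rw [h, fdiff_iter_zero_fun t']
  | succ k IH =>
    intro t a ht
    obtain ⟨t', rfl⟩ : ∃ t', t = t' + 1 := ⟨t - 1, by omega⟩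
    rw [Function.iterate_succ_apply, fdiff_asc k a]
    have he : (fun m => ((k : ℚ) + 1) * (((m + a + 1).ascFactorial k : ℕ) : ℚ))
        = fun m => ((k : ℚ) + 1) * (((m + (a + 1)).ascFactorial k : ℕ) : ℚ) := by
      funext m
      rw [Nat.add_assoc]
    rw [he, fdiff_iter_const_mul]
    show ((k : ℚ) + 1) * fdiff^[t'] (fun m => (((m + (a + 1)).ascFactorial k : ℕ) : ℚ)) 0 = 0
    rw [IH t' (a + 1) (Nat.lt_of_succ_lt_succ ht), mul_zero]

end FinMatroid
namespace FinMatroid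

variable {α : Type*} [DecidableEq α]

lemma star_identity (M : FinMatroid α) (hE : M.E.Nonempty)
    {g k : ℕ} (hgirth : ∀ S ⊆ M.E, S.card < g → M.rk S = S.card) (hk : k < g) :
    ∑ F ∈ M.properFlats, M.redCharContractOne F * ((F.card.ascFactorial k : ℕ) : ℚ)
      = (M.rk M.E : ℚ) * ((M.E.card.ascFactorial k : ℕ) : ℚ)
        - (k : ℚ) * (M.E.card : ℚ) * ((M.E.card.ascFactorial (k - 1) : ℕ) : ℚ) := by
  classical
  set r := M.rk M.E with hr
  set n := M.E.card with hn
  set f : ℕ → ℚ := fun m => ((m.ascFactorial k : ℕ) : ℚ) with hf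
  have hnpos : 1 ≤ n := Finset.card_pos.mpr hE
  have hPF : M.properFlats = M.flats.erase M.E := by
    rw [properFlats]
    exact Finset.filter_ne' _ _
  have hsum1 : ∑ T ∈ M.E.powerset, fdiff^[T.card] f 0 = f n := newton M.E f
  have hsum2 : ∑ T ∈ M.E.powerset, fdiff^[T.card] f 0 * (T.card : ℚ)
      = (n : ℚ) * (fdiff f) (n - 1) := by
    calc ∑ T ∈ M.E.powerset, fdiff^[T.card] f 0 * (T.card : ℚ)
        = ∑ T ∈ M.E.powerset, ∑ _x ∈ T, fdiff^[T.card] f 0 := by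
          refine Finset.sum_congr rfl fun T _ => ?_
          rw [Finset.sum_const, nsmul_eq_mul, mul_comm]
      _ = ∑ x ∈ M.E, ∑ T ∈ M.E.powerset.filter (fun T => x ∈ T), fdiff^[T.card] f 0 := by
          refine Finset.sum_comm' ?_
          intro T x
          simp only [Finset.mem_powerset, Finset.mem_filter]
          exact ⟨fun h => ⟨h, h.1 h.2⟩, fun h => h.1⟩
      _ = ∑ x ∈ M.E, (fdiff f) ((M.E.erase x).card) := by
          refine Finset.sum_congr rfl fun x hx => ?_
          have hxe : x ∉ M.E.erase x := Finset.notMem_erase x M.E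
          have hins : M.E = insert x (M.E.erase x) := (Finset.insert_erase hx).symm
          rw [Finset.sum_filter]
          conv_lhs => rw [hins]
          rw [Finset.sum_powerset_insert hxe]
          have hA : ∑ t ∈ (M.E.erase x).powerset,
              (if x ∈ t then fdiff^[t.card] f 0 else 0) = 0 :=
            Finset.sum_eq_zero fun t ht =>
              if_neg (fun hxt => hxe ((Finset.mem_powerset.mp ht) hxt))
          have hB : ∀ t ∈ (M.E.erase x).powerset,
              (if x ∈ insert x t then fdiff^[(insert x t).card] f 0 else 0)
                = fdiff^[t.card] (fdiff f) 0 := by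
            intro t ht
            rw [if_pos (Finset.mem_insert_self x t),
              Finset.card_insert_of_notMem (fun hxt => hxe ((Finset.mem_powerset.mp ht) hxt)),
              Function.iterate_succ_apply]
          rw [hA, zero_add, Finset.sum_congr rfl hB, newton (M.E.erase x) (fdiff f)]
      _ = (n : ℚ) * (fdiff f) (n - 1) := by
          rw [Finset.sum_congr rfl (fun x hx => by rw [Finset.card_erase_of_mem hx]),
            Finset.sum_const, nsmul_eq_mul]
  have hfd : (fdiff f) (n - 1) = (k : ℚ) * ((n.ascFactorial (k - 1) : ℕ) : ℚ) := by
    have hn1 : n - 1 + 1 = n := by omega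
    cases k with
    | zero => simp [fdiff, hf, Nat.ascFactorial_zero]
    | succ k' =>
      have key := asc_succ_diff (n - 1) k'
      rw [hn1] at key
      show (((n - 1 + 1).ascFactorial (k' + 1) : ℕ) : ℚ)
          - (((n - 1).ascFactorial (k' + 1) : ℕ) : ℚ) = _
      rw [hn1, key]
      simp only [Nat.add_sub_cancel]
      push_cast
      ring
  calc ∑ F ∈ M.properFlats, M.redCharContractOne F * ((F.card.ascFactorial k : ℕ) : ℚ)
      = ∑ F ∈ M.properFlats, M.cval F * f F.card :=
        Finset.sum_congr rfl fun F hF => by rw [M.redCharContractOne_eq_cval hF]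
    _ = ∑ F ∈ M.flats, M.cval F * f F.card := by
        rw [hPF, ← Finset.sum_erase_add M.flats _ M.ground_mem_flats, M.cval_ground,
          zero_mul, add_zero]
    _ = ∑ F ∈ M.flats, ∑ T ∈ F.powerset, M.cval F * fdiff^[T.card] f 0 := by
        refine Finset.sum_congr rfl fun F hF => ?_
        rw [← Finset.mul_sum, newton F f]
    _ = ∑ T ∈ M.E.powerset, ∑ F ∈ M.flats.filter (fun F => T ⊆ F),
          M.cval F * fdiff^[T.card] f 0 := by
        refine Finset.sum_comm' ?_
        intro F T
        simp only [Finset.mem_powerset, Finset.mem_filter]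
        constructor
        · rintro ⟨hF, hTF⟩
          exact ⟨⟨hF, hTF⟩, hTF.trans (M.flat_subset_ground hF)⟩
        · rintro ⟨⟨hF, hTF⟩, _⟩
          exact ⟨hF, hTF⟩
    _ = ∑ T ∈ M.E.powerset, fdiff^[T.card] f 0 * ((r : ℚ) - M.rk T) := by
        refine Finset.sum_congr rfl fun T hT => ?_
        rw [← Finset.sum_mul, M.sum_cval_flats_supset (Finset.mem_powerset.mp hT)]
        exact mul_comm _ _
    _ = ∑ T ∈ M.E.powerset, fdiff^[T.card] f 0 * ((r : ℚ) - T.card) := by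
        refine Finset.sum_congr rfl fun T hT => ?_
        by_cases hc : T.card < g
        · rw [hgirth T (Finset.mem_powerset.mp hT) hc]
        · have hkc : k < T.card := by omega
          have hfe : f = fun m => (((m + 0).ascFactorial k : ℕ) : ℚ) := by
            funext m; rw [Nat.add_zero]
          have hz : fdiff^[T.card] f 0 = 0 := by
            rw [hfe]
            exact fdiff_iter_asc_eq_zero k T.card 0 hkc
          rw [hz, zero_mul, zero_mul]
    _ = (r : ℚ) * ((n.ascFactorial k : ℕ) : ℚ)
        - (k : ℚ) * (n : ℚ) * ((n.ascFactorial (k - 1) : ℕ) : ℚ) := by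
        have hexpand : ∀ T ∈ M.E.powerset, fdiff^[T.card] f 0 * ((r : ℚ) - T.card)
            = fdiff^[T.card] f 0 * (r : ℚ) - fdiff^[T.card] f 0 * (T.card : ℚ) :=
          fun T _ => by ring
        rw [Finset.sum_congr rfl hexpand, Finset.sum_sub_distrib, ← Finset.sum_mul, hsum1,
          hsum2, hfd, hf]
        ring

end FinMatroid
section AnalysisHelpers

open Topology

lemma iteratedDeriv_const_mul_fun (c : ℝ) (f : ℝ → ℝ) (k : ℕ) :
    iteratedDeriv k (fun t => c * f t) = fun x => c * iteratedDeriv k f x := by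
  induction k with
  | zero => simp [iteratedDeriv_zero]
  | succ k IH =>
    rw [iteratedDeriv_succ, IH]
    funext x
    rw [iteratedDeriv_succ]
    exact deriv_const_mul_field c

lemma iteratedDeriv_sum_of_contDiffOn {β : Type*} {U : Set ℝ} (hU : IsOpen U)
    (s : Finset β) (k : ℕ) :
    ∀ (F : β → ℝ → ℝ), (∀ b ∈ s, ContDiffOn ℝ (⊤ : ℕ∞) (F b) U) → ∀ x ∈ U,
    iteratedDeriv k (fun t => ∑ b ∈ s, F b t) x = ∑ b ∈ s, iteratedDeriv k (F b) x := by
  induction k with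
  | zero => intro F _ x _; simp [iteratedDeriv_zero]
  | succ k IH =>
    intro F hF x hx
    rw [iteratedDeriv_succ']
    have hder : ∀ y ∈ U, deriv (fun t => ∑ b ∈ s, F b t) y = ∑ b ∈ s, deriv (F b) y := by
      intro y hy
      exact deriv_fun_sum fun b hb =>
        (((hF b hb).differentiableOn (by simp)).differentiableAt (hU.mem_nhds hy))
    have hev : deriv (fun t => ∑ b ∈ s, F b t) =ᶠ[𝓝 x] fun y => ∑ b ∈ s, deriv (F b) y :=
      Filter.eventuallyEq_of_mem (hU.mem_nhds hx) hder
    rw [hev.iteratedDeriv_eq k]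
    rw [IH (fun b => deriv (F b)) (fun b hb => (hF b hb).deriv_of_isOpen hU (mod_cast le_top)) x hx]
    exact Finset.sum_congr rfl fun b _ => by rw [iteratedDeriv_succ']

lemma iteratedDeriv_add_of_contDiffOn {U : Set ℝ} (hU : IsOpen U) (k : ℕ) :
    ∀ (f g : ℝ → ℝ), ContDiffOn ℝ (⊤ : ℕ∞) f U → ContDiffOn ℝ (⊤ : ℕ∞) g U → ∀ x ∈ U,
    iteratedDeriv k (fun t => f t + g t) x = iteratedDeriv k f x + iteratedDeriv k g x := by
  induction k with
  | zero => intro f g _ _ x _; simp [iteratedDeriv_zero]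
  | succ k IH =>
    intro f g hf hg x hx
    rw [iteratedDeriv_succ']
    have hder : ∀ y ∈ U, deriv (fun t => f t + g t) y = deriv f y + deriv g y := by
      intro y hy
      exact deriv_fun_add ((hf.differentiableOn (by simp)).differentiableAt (hU.mem_nhds hy))
        ((hg.differentiableOn (by simp)).differentiableAt (hU.mem_nhds hy))
    have hev : deriv (fun t => f t + g t) =ᶠ[𝓝 x] fun y => deriv f y + deriv g y :=
      Filter.eventuallyEq_of_mem (hU.mem_nhds hx) hder
    rw [hev.iteratedDeriv_eq k]
    rw [IH (deriv f) (deriv g) (hf.deriv_of_isOpen hU (mod_cast le_top)) (hg.deriv_of_isOpen hU (mod_cast le_top)) x hx]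
    rw [← iteratedDeriv_succ', ← iteratedDeriv_succ']

lemma iteratedDeriv_linear_mul {U : Set ℝ} (hU : IsOpen U) (a b : ℝ) (k : ℕ) :
    ∀ (f : ℝ → ℝ), ContDiffOn ℝ (⊤ : ℕ∞) f U → ∀ x ∈ U,
    iteratedDeriv k (fun t => (a * t + b) * f t) x
      = (a * x + b) * iteratedDeriv k f x + (k : ℝ) * a * iteratedDeriv (k - 1) f x := by
  induction k with
  | zero => intro f hf x hx; simp [iteratedDeriv_zero]
  | succ k IH =>
    intro f hf x hx
    have hlin : ContDiff ℝ (⊤ : ℕ∞) (fun t : ℝ => a * t + b) :=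
      (contDiff_const.mul contDiff_id).add contDiff_const
    have hdiffat : ∀ y ∈ U, DifferentiableAt ℝ f y := fun y hy =>
      (hf.differentiableOn (by simp)).differentiableAt (hU.mem_nhds hy)
    rw [iteratedDeriv_succ']
    have hder : ∀ y ∈ U, deriv (fun t => (a * t + b) * f t) y
        = a * f y + (a * y + b) * deriv f y := by
      intro y hy
      rw [deriv_fun_mul (hlin.differentiable (by simp)).differentiableAt (hdiffat y hy)]
      have hd : deriv (fun t : ℝ => a * t + b) y = a := by
        rw [deriv_add_const, deriv_const_mul_field a, deriv_id'', mul_one]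
      rw [hd]
    have hev : deriv (fun t => (a * t + b) * f t) =ᶠ[𝓝 x]
        fun y => a * f y + (a * y + b) * deriv f y :=
      Filter.eventuallyEq_of_mem (hU.mem_nhds hx) hder
    rw [hev.iteratedDeriv_eq k]
    have hf' : ContDiffOn ℝ (⊤ : ℕ∞) (deriv f) U := hf.deriv_of_isOpen hU (mod_cast le_top)
    have h1 : ContDiffOn ℝ (⊤ : ℕ∞) (fun y => a * f y) U := contDiffOn_const.mul hf
    have h2 : ContDiffOn ℝ (⊤ : ℕ∞) (fun y => (a * y + b) * deriv f y) U :=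
      (hlin.contDiffOn).mul hf'
    rw [iteratedDeriv_add_of_contDiffOn hU k _ _ h1 h2 x hx]
    have h3 : iteratedDeriv k (fun y => a * f y) x = a * iteratedDeriv k f x := by
      rw [iteratedDeriv_const_mul_fun]
    rw [h3, IH (deriv f) hf' x hx]
    have h4 : (k : ℝ) * a * iteratedDeriv (k - 1) (deriv f) x
        = (k : ℝ) * a * iteratedDeriv k f x := by
      cases k with
      | zero => simp
      | succ k' =>
        rw [Nat.add_sub_cancel, ← iteratedDeriv_succ']
    rw [h4, ← iteratedDeriv_succ', Nat.add_sub_cancel]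
    push_cast
    ring

end AnalysisHelpers
section MainProof

open Topology FinMatroid

lemma iteratedDeriv_one_fun (k : ℕ) :
    iteratedDeriv k (fun _ : ℝ => (1 : ℝ)) = fun _ => if k = 0 then (1 : ℝ) else 0 := by
  induction k with
  | zero => simp [iteratedDeriv_zero]
  | succ k IH =>
    rw [iteratedDeriv_succ, IH]
    funext x
    cases k <;> simp

lemma main_induction {α : Type*} [DecidableEq α]
    (Z : FinMatroid α → ℝ → ℝ) (hZ : IsTopZetaFun Z) (g : ℕ) :
    ∀ (N : ℕ) (M : FinMatroid α), M.E.card ≤ N → M.Loopless →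
      (∀ S ⊆ M.E, S.card < g → M.rk S = S.card) →
      ContDiffOn ℝ (⊤ : ℕ∞) (Z M) (Set.Ioi (-(1 : ℝ) / (M.E.card + 1))) ∧
      (∀ k < g, iteratedDeriv k (Z M) 0
        = (-1 : ℝ) ^ k * ((M.E.card.ascFactorial k : ℕ) : ℝ)) := by
  intro N
  induction N with
  | zero =>
    intro M hcard _ _
    have hempty : M.E = ∅ := Finset.card_eq_zero.mp (Nat.le_zero.mp hcard)
    have hone := hZ.1 M hempty
    constructor
    · rw [hone]; exact contDiffOn_const
    · intro k _
      rw [hone, iteratedDeriv_one_fun k, hempty]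
      cases k with
      | zero => simp
      | succ k' => simp [Nat.zero_ascFactorial]
  | succ N IH =>
    intro M hcard hL hgirth
    by_cases hle : M.E.card ≤ N
    · exact IH M hle hL hgirth
    have hn : M.E.card = N + 1 := by omega
    have hE : M.E.Nonempty := Finset.card_pos.mp (by omega)
    set n := M.E.card with hndef
    set r := M.rk M.E with hrdef
    have hr1 : 1 ≤ r := by
      obtain ⟨x, hx⟩ := hE
      have h1 := hL x hx
      have h2 : M.rk {x} ≤ M.rk M.E := M.rk_mono (Finset.singleton_subset_iff.mpr hx)
      omega
    set U : Set ℝ := Set.Ioi (-(1 : ℝ) / (n + 1)) with hUdef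
    have hUopen : IsOpen U := isOpen_Ioi
    have h0U : (0 : ℝ) ∈ U := by
      rw [hUdef, Set.mem_Ioi]
      have : (0 : ℝ) < (n : ℝ) + 1 := by positivity
      rw [neg_div]
      simp only [Left.neg_neg_iff]
      positivity
    -- restrictions
    have hrestr : ∀ F ∈ M.properFlats,
        ContDiffOn ℝ (⊤ : ℕ∞) (Z (M.restrict F)) U ∧
        (∀ k < g, iteratedDeriv k (Z (M.restrict F)) 0
          = (-1 : ℝ) ^ k * ((F.card.ascFactorial k : ℕ) : ℝ)) := by
      intro F hF
      obtain ⟨hFfl, hFne⟩ := Finset.mem_filter.mp hF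
      have hFsub : F ⊆ M.E := M.flat_subset_ground hFfl
      have hFcard : F.card ≤ N := by
        have : F.card < M.E.card := Finset.card_lt_card (Finset.ssubset_iff_subset_ne.mpr ⟨hFsub, hFne⟩)
        omega
      have hLF : (M.restrict F).Loopless := fun x hx => hL x (hFsub hx)
      have hgF : ∀ S ⊆ (M.restrict F).E, S.card < g → (M.restrict F).rk S = S.card :=
        fun S hS hc => hgirth S (hS.trans hFsub) hc
      have hIH := IH (M.restrict F) hFcard hLF hgF
      have hsubU : U ⊆ Set.Ioi (-(1 : ℝ) / ((M.restrict F).E.card + 1)) := by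
        apply Set.Ioi_subset_Ioi
        rw [neg_div, neg_div, neg_le_neg_iff]
        apply one_div_le_one_div_of_le
        · positivity
        · have hfc : (M.restrict F).E.card ≤ n := by
            show F.card ≤ n
            omega
          have hfc' : ((M.restrict F).E.card : ℝ) ≤ (n : ℝ) := by exact_mod_cast hfc
          linarith
      refine ⟨hIH.1.mono hsubU, ?_⟩
      intro k hk
      exact hIH.2 k hk
    -- the recurrence
    have hrecur : ∀ s : ℝ, Z M s
        = (∑ F ∈ M.properFlats, (M.redCharContractOne F : ℝ) * Z (M.restrict F) s)
          / ((n : ℝ) * s + (r : ℝ)) := hZ.2 M hE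
    have hDpos : ∀ s ∈ U, (0 : ℝ) < (n : ℝ) * s + (r : ℝ) := by
      intro s hs
      rw [hUdef, Set.mem_Ioi] at hs
      have hn1 : (0 : ℝ) < (n : ℝ) + 1 := by positivity
      have h2 : (-1 : ℝ) < s * ((n : ℝ) + 1) := (div_lt_iff₀ hn1).mp hs
      have hr1' : (1 : ℝ) ≤ (r : ℝ) := by exact_mod_cast hr1
      rcases le_or_gt 0 s with hs0 | hs0
      · have : (0 : ℝ) ≤ (n : ℝ) * s := by positivity
        linarith
      · nlinarith
    have hDne : ∀ s ∈ U, ((n : ℝ) * s + (r : ℝ)) ≠ 0 := fun s hs => ne_of_gt (hDpos s hs)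
    have hsummand : ∀ F ∈ M.properFlats,
        ContDiffOn ℝ (⊤ : ℕ∞) (fun s => (M.redCharContractOne F : ℝ) * Z (M.restrict F) s) U :=
      fun F hF => contDiffOn_const.mul (hrestr F hF).1
    have hcontN : ContDiffOn ℝ (⊤ : ℕ∞)
        (fun s => ∑ F ∈ M.properFlats, (M.redCharContractOne F : ℝ) * Z (M.restrict F) s) U :=
      ContDiffOn.sum fun F hF => hsummand F hF
    have hcontD : ContDiffOn ℝ (⊤ : ℕ∞) (fun s : ℝ => (n : ℝ) * s + (r : ℝ)) U :=
      ((contDiff_const.mul contDiff_id).add contDiff_const).contDiffOn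
    have hcontZM : ContDiffOn ℝ (⊤ : ℕ∞) (Z M) U := by
      refine (hcontN.div hcontD hDne).congr ?_
      intro s _
      exact hrecur s
    constructor
    · exact hcontZM
    -- derivative computation
    intro k hkg
    induction k using Nat.strong_induction_on with
    | _ k IHk =>
    have heqDZ : Set.EqOn (fun s => ((n : ℝ) * s + (r : ℝ)) * Z M s)
        (fun s => ∑ F ∈ M.properFlats, (M.redCharContractOne F : ℝ) * Z (M.restrict F) s) U := by
      intro s hs
      show ((n : ℝ) * s + (r : ℝ)) * Z M s = _
      rw [hrecur s, mul_comm, div_mul_cancel₀ _ (hDne s hs)]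
    have hev : (fun s => ((n : ℝ) * s + (r : ℝ)) * Z M s)
        =ᶠ[𝓝 (0 : ℝ)] (fun s => ∑ F ∈ M.properFlats,
          (M.redCharContractOne F : ℝ) * Z (M.restrict F) s) :=
      Filter.eventuallyEq_of_mem (hUopen.mem_nhds h0U) heqDZ
    have hLHS := iteratedDeriv_linear_mul hUopen (n : ℝ) (r : ℝ) k (Z M) hcontZM 0 h0U
    have hRHS := iteratedDeriv_sum_of_contDiffOn hUopen M.properFlats k
      (fun F s => (M.redCharContractOne F : ℝ) * Z (M.restrict F) s) hsummand 0 h0U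
    have hRHS2 : ∀ F ∈ M.properFlats,
        iteratedDeriv k (fun s => (M.redCharContractOne F : ℝ) * Z (M.restrict F) s) 0
          = (M.redCharContractOne F : ℝ)
            * ((-1 : ℝ) ^ k * ((F.card.ascFactorial k : ℕ) : ℝ)) := by
      intro F hF
      rw [iteratedDeriv_const_mul_fun]
      show (M.redCharContractOne F : ℝ) * iteratedDeriv k (Z (M.restrict F)) 0 = _
      rw [(hrestr F hF).2 k hkg]
    have hstarQ := M.star_identity hE hgirth hkg
    have hstarR : ∑ F ∈ M.properFlats,
        (M.redCharContractOne F : ℝ) * ((F.card.ascFactorial k : ℕ) : ℝ)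
          = (r : ℝ) * ((n.ascFactorial k : ℕ) : ℝ)
            - (k : ℝ) * (n : ℝ) * ((n.ascFactorial (k - 1) : ℕ) : ℝ) := by
      have := congrArg (fun q : ℚ => (q : ℝ)) hstarQ
      push_cast at this ⊢
      convert this using 2
    -- combine
    have hkey : ((n : ℝ) * 0 + (r : ℝ)) * iteratedDeriv k (Z M) 0
        + (k : ℝ) * (n : ℝ) * iteratedDeriv (k - 1) (Z M) 0
          = (-1 : ℝ) ^ k * ((r : ℝ) * ((n.ascFactorial k : ℕ) : ℝ)
            - (k : ℝ) * (n : ℝ) * ((n.ascFactorial (k - 1) : ℕ) : ℝ)) := by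
      rw [← hLHS, hev.iteratedDeriv_eq k, hRHS, Finset.sum_congr rfl hRHS2]
      rw [← hstarR, Finset.mul_sum]
      refine Finset.sum_congr rfl fun F _ => ?_
      ring
    have hprev : (k : ℝ) * (n : ℝ) * iteratedDeriv (k - 1) (Z M) 0
        = (k : ℝ) * (n : ℝ) * ((-1 : ℝ) ^ (k - 1) * ((n.ascFactorial (k - 1) : ℕ) : ℝ)) := by
      cases k with
      | zero => simp
      | succ k' =>
        rw [Nat.add_sub_cancel, IHk k' (Nat.lt_succ_self k') (Nat.lt_of_succ_lt hkg)]
    have hsign : (k : ℝ) * (-1 : ℝ) ^ (k - 1) = -((k : ℝ) * (-1 : ℝ) ^ k) := by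
      cases k with
      | zero => simp
      | succ k' =>
        rw [Nat.add_sub_cancel, pow_succ]
        ring
    have hrne : ((r : ℝ)) ≠ 0 := by positivity
    have hfinal : ((n : ℝ) * 0 + (r : ℝ)) * iteratedDeriv k (Z M) 0
        = ((n : ℝ) * 0 + (r : ℝ)) * ((-1 : ℝ) ^ k * ((n.ascFactorial k : ℕ) : ℝ)) := by
      rw [hprev] at hkey
      linear_combination hkey - (n : ℝ) * ((n.ascFactorial (k - 1) : ℕ) : ℝ) * hsign
    have hne2 : ((n : ℝ) * 0 + (r : ℝ)) ≠ 0 := by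
      rw [mul_zero, zero_add]; exact hrne
    exact mul_left_cancel₀ hne2 hfinal

end MainProof


open FinMatroid in
/-- if `M` is a loopless matroid of girth `g > 0` (every circuit has size
`≥ g`, equivalently every subset of the ground set of size `< g` is independent), then
for all `0 ≤ k < g` the `k`-th derivative of the topological zeta function at `0` is
the signed rising factorial `(-1)^k |E|(|E|+1)⋯(|E|+k-1)`. -/
theorem topZeta_taylor_girth {α : Type*} [DecidableEq α]
    (Z : FinMatroid α → ℝ → ℝ) (hZ : IsTopZetaFun Z)
    (M : FinMatroid α) (hL : M.Loopless) (g : ℕ) (hg : 0 < g)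
    (hgirth : ∀ S ⊆ M.E, S.card < g → M.rk S = S.card)
    (k : ℕ) (hk : k < g) :
    iteratedDeriv k (Z M) 0 = (-1 : ℝ) ^ k * (M.E.card.ascFactorial k : ℝ) := by
  exact (main_induction Z hZ g M.E.card M le_rfl hL hgirth).2 k hk
end
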